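/- Let σ, ρ, γ > 0, w, w₁, ..., w_m ∈ ℝ^L, and let H = convexHull{h⁽¹⁾, ..., h⁽ᴶ⁾}. Define SNIR(h) = ρ²⟨w,h⟩² / (σ² + Σᵢ ρ²⟨wᵢ,h⟩²). If ⟨w, h⁽ʲ⁾⟩ ≥ 0 and SNIR(h⁽ʲ⁾) ≥ γ for all j, then SNIR(h) ≥ γ for all h ∈ H. -/

import Mathlib

open RealInnerProductSpace

/-!
The denominator of the SNIR is the squared norm of the noise-plus-interference vector
`V h = (σ, ρ⟪w₁, h⟫, …, ρ⟪wₘ, h⟫)`, which depends affinely on `h`. Hence, on `⟪w, h⟫ ≥ 0`, the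
constraint `SNIR(h) ≥ γ` is the second-order cone constraint `√γ ‖V h‖ ≤ ρ⟪w, h⟫`: a convex function
bounded by a linear one. Its solution set is convex, so it contains the convex hull of the vertices
as soon as it contains the vertices.
-/

theorem convex_setOf_mul_norm_le {E F : Type*} [AddCommGroup E] [Module ℝ E]
    [SeminormedAddCommGroup F] [NormedSpace ℝ F] (f : E →ᵃ[ℝ] F) (g : E →ₗ[ℝ] ℝ) {c : ℝ}
    (hc : 0 ≤ c) : Convex ℝ {x | c * ‖f x‖ ≤ g x} := by
  have hconv : ConvexOn ℝ Set.univ (c • (norm ∘ f) - ⇑g) :=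
    (((convexOn_norm convex_univ).comp_affineMap f).smul hc).sub (g.concaveOn convex_univ)
  simpa [sub_nonpos] using hconv.convex_le 0

section SNIR

variable {E : Type*} [NormedAddCommGroup E] [InnerProductSpace ℝ E] {m : ℕ}

def noiseInterferenceVec (σ ρ : ℝ) (wi : Fin m → E) : E →ᵃ[ℝ] EuclideanSpace ℝ (Fin (m + 1)) where
  toFun x := WithLp.toLp 2 (Fin.cons σ fun i => ρ * ⟪wi i, x⟫)
  linear :=
    { toFun := fun x => WithLp.toLp 2 (Fin.cons 0 fun i => ρ * ⟪wi i, x⟫)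
      map_add' := fun x y => by
        ext k
        refine Fin.cases ?_ (fun i => ?_) k <;> simp [inner_add_right, mul_add]
      map_smul' := fun a x => by
        ext k
        refine Fin.cases ?_ (fun i => ?_) k <;> simp [real_inner_smul_right]; ring }
  map_vadd' x v := by
    ext k
    refine Fin.cases ?_ (fun i => ?_) k <;> simp [inner_add_right, mul_add]

noncomputable def snir (σ ρ : ℝ) (w : E) (wi : Fin m → E) (x : E) : ℝ :=
  ρ ^ 2 * ⟪w, x⟫ ^ 2 / (σ ^ 2 + ∑ i, ρ ^ 2 * ⟪wi i, x⟫ ^ 2)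

theorem norm_noiseInterferenceVec_sq (σ ρ : ℝ) (wi : Fin m → E) (x : E) :
    ‖noiseInterferenceVec σ ρ wi x‖ ^ 2 = σ ^ 2 + ∑ i, ρ ^ 2 * ⟪wi i, x⟫ ^ 2 := by
  simp [EuclideanSpace.norm_sq_eq, Fin.sum_univ_succ, noiseInterferenceVec, mul_pow]

theorem le_snir_iff_sq_le {σ γ ρ : ℝ} (hσ : σ ≠ 0) (hγ : 0 ≤ γ) (w : E) (wi : Fin m → E) (x : E) :
    γ ≤ snir σ ρ w wi x ↔ (√γ * ‖noiseInterferenceVec σ ρ wi x‖) ^ 2 ≤ (ρ * ⟪w, x⟫) ^ 2 := by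
  have hden : 0 < σ ^ 2 + ∑ i, ρ ^ 2 * ⟪wi i, x⟫ ^ 2 := by
    have : 0 ≤ ∑ i, ρ ^ 2 * ⟪wi i, x⟫ ^ 2 := Finset.sum_nonneg fun i _ => by positivity
    positivity
  rw [snir, le_div_iff₀ hden, mul_pow, mul_pow, Real.sq_sqrt hγ, norm_noiseInterferenceVec_sq]

theorem le_snir_and_inner_nonneg_iff {σ γ ρ : ℝ} (hσ : σ ≠ 0) (hγ : 0 ≤ γ) (hρ : 0 < ρ) (w : E)
    (wi : Fin m → E) (x : E) :
    γ ≤ snir σ ρ w wi x ∧ 0 ≤ ⟪w, x⟫ ↔ √γ * ‖noiseInterferenceVec σ ρ wi x‖ ≤ ρ * ⟪w, x⟫ := by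
  rw [le_snir_iff_sq_le hσ hγ]
  constructor
  · rintro ⟨hsq, hw⟩
    exact (sq_le_sq₀ (by positivity) (by positivity)).mp hsq
  · intro hle
    have hw : 0 ≤ ρ * ⟪w, x⟫ := (by positivity : 0 ≤ √γ * _).trans hle
    exact ⟨pow_le_pow_left₀ (by positivity) hle 2, nonneg_of_mul_nonneg_right hw hρ⟩

end SNIR

theorem stmt_12 {L m J : ℕ} (σ γ ρ : ℝ) (hσ : σ > 0) (hγ : γ > 0) (hρ : ρ > 0)
    (w : EuclideanSpace ℝ (Fin L)) (wi : Fin m → EuclideanSpace ℝ (Fin L))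
    (hv : Fin J → EuclideanSpace ℝ (Fin L))
    (hC4 : ∀ j, ⟪w, hv j⟫ ≥ 0)
    (hC1 : ∀ j, ρ ^ 2 * ⟪w, hv j⟫ ^ 2 /
      (σ ^ 2 + ∑ i, ρ ^ 2 * ⟪wi i, hv j⟫ ^ 2) ≥ γ) :
    ∀ h ∈ convexHull ℝ (Set.range hv),
      ρ ^ 2 * ⟪w, h⟫ ^ 2 / (σ ^ 2 + ∑ i, ρ ^ 2 * ⟪wi i, h⟫ ^ 2) ≥ γ := by
  have hcone : Convex ℝ {x | √γ * ‖noiseInterferenceVec σ ρ wi x‖ ≤ ρ * ⟪w, x⟫} :=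
    convex_setOf_mul_norm_le _ (ρ • innerₛₗ ℝ w) (Real.sqrt_nonneg γ)
  have hvertices : Set.range hv ⊆ {x | √γ * ‖noiseInterferenceVec σ ρ wi x‖ ≤ ρ * ⟪w, x⟫} := by
    rintro _ ⟨j, rfl⟩
    exact (le_snir_and_inner_nonneg_iff hσ.ne' hγ.le hρ w wi (hv j)).mp ⟨hC1 j, hC4 j⟩
  intro h hh
  exact ((le_snir_and_inner_nonneg_iff hσ.ne' hγ.le hρ w wi h).mpr
    (convexHull_min hvertices hcone hh)).1
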